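/- In base 10, the smallest 6-frugal number is 40353607 = 7^9; that is, h(40353607) ≥ 6, and every positive integer n < 40353607 satisfies h(n) < 6. -/

import Mathlib

/-- Number of digits of `n` in base `B`. -/
def dig (B n : ℕ) : ℕ := (Nat.digits B n).length

/-- Number of digits needed to write the prime power factorisation of `n` in base `B`. -/
def phi (B n : ℕ) : ℕ :=
  ∑ p ∈ n.factorization.support,
    (dig B p + if n.factorization p = 1 then 0 else dig B (n.factorization p))

/-- `h B n = δ(n) - φ(n)` as an integer. -/
def hEcon (B n : ℕ) : ℤ := (dig B n : ℤ) - (phi B n : ℤ)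

/-!
If `h(n) ≥ 6` and `n < 7^9`, then `n` has at most 8 digits, so `φ(n) ≤ 2`, while `n` has at
least `6 + φ(n)` digits. Every prime factor costs at least one digit. If `n` has two or more
prime factors, each costs exactly one digit, so `n` is a product of distinct one-digit primes
and `n < 10^2`. If `n = p^a`, then either `a = 1` and `n` has `φ(n)` digits, or `p` and `a` are
single digits and `p^a ≥ 10^7`, which a finite check rules out below `7^9`.
-/

def primeCost (B n p : ℕ) : ℕ :=
  dig B p + if n.factorization p = 1 then 0 else dig B (n.factorization p)

section PrimeCost

variable {B n p : ℕ}

lemma dig_pos (hn : n ≠ 0) : 0 < dig B n :=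
  List.length_pos_of_ne_nil (Nat.digits_ne_nil_iff_ne_zero.2 hn)

lemma dig_le_iff {k : ℕ} (hB : 1 < B) : dig B n ≤ k ↔ n < B ^ k :=
  Nat.digits_length_le_iff hB n

lemma phi_eq_sum_primeCost (B n : ℕ) : phi B n = ∑ p ∈ n.primeFactors, primeCost B n p := by
  rw [phi, Nat.support_factorization]
  rfl

lemma one_le_primeCost (hp : p ∈ n.primeFactors) : 1 ≤ primeCost B n p :=
  (dig_pos (Nat.prime_of_mem_primeFactors hp).ne_zero).trans_le (Nat.le_add_right _ _)

lemma card_primeFactors_le_phi (B n : ℕ) : n.primeFactors.card ≤ phi B n := by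
  rw [phi_eq_sum_primeCost, Finset.card_eq_sum_ones]
  exact Finset.sum_le_sum fun p hp => one_le_primeCost hp

lemma primeCost_eq_one (hB : 1 < B) (hp : p ∈ n.primeFactors) (h : primeCost B n p = 1) :
    n.factorization p = 1 ∧ p < B := by
  have hdig_p : 0 < dig B p := dig_pos (Nat.prime_of_mem_primeFactors hp).ne_zero
  have hexp : n.factorization p ≠ 0 :=
    Finsupp.mem_support_iff.1 (by rwa [Nat.support_factorization])
  unfold primeCost at h
  split_ifs at h with hexp_one
  · exact ⟨hexp_one, by simpa using (dig_le_iff hB).1 (by omega : dig B p ≤ 1)⟩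
  · have := dig_pos (B := B) hexp
    omega

lemma lt_pow_card_of_phi_le_card (hB : 1 < B) (hn : 1 < n) (h : phi B n ≤ n.primeFactors.card) :
    n < B ^ n.primeFactors.card := by
  have hcost : ∀ p ∈ n.primeFactors, 1 = primeCost B n p := by
    refine (Finset.sum_eq_sum_iff_of_le fun p hp => one_le_primeCost hp).1 ?_
    rw [← Finset.card_eq_sum_ones, ← phi_eq_sum_primeCost]
    exact le_antisymm (card_primeFactors_le_phi B n) h
  have hfactor : ∀ p ∈ n.primeFactors, p ^ n.factorization p < B := fun p hp => by
    obtain ⟨hexp, hpB⟩ := primeCost_eq_one hB hp (hcost p hp).symm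
    rwa [hexp, pow_one]
  calc n = ∏ p ∈ n.primeFactors, p ^ n.factorization p :=
        Nat.prod_primeFactors_pow_factorization (by omega)
    _ < ∏ _p ∈ n.primeFactors, B :=
        Finset.prod_lt_prod_of_nonempty
          (fun p hp => pow_pos (Nat.prime_of_mem_primeFactors hp).pos _) hfactor
          (Nat.nonempty_primeFactors.2 hn)
    _ = B ^ n.primeFactors.card := Finset.prod_const B

lemma lt_sq_of_not_isPrimePow (hB : 1 < B) (hn : 1 < n) (hpow : ¬IsPrimePow n)
    (h : phi B n ≤ 2) : n < B ^ 2 := by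
  have hcard_le := card_primeFactors_le_phi B n
  have hcard : n.primeFactors.card = 2 := by
    have := Finset.card_pos.2 (Nat.nonempty_primeFactors.2 hn)
    rw [isPrimePow_iff_card_primeFactors_eq_one] at hpow
    omega
  simpa [hcard] using lt_pow_card_of_phi_le_card hB hn (by omega)

lemma phi_prime_pow {a : ℕ} (hp : p.Prime) (ha : a ≠ 0) :
    phi B (p ^ a) = dig B p + if a = 1 then 0 else dig B a := by
  rw [phi, hp.factorization_pow, Finsupp.support_single _ ha, Finset.sum_singleton,
    Finsupp.single_eq_same]

end PrimeCost

lemma prime_pow_lt_ten_pow_seven {p a : ℕ} (hp : p.Prime) (hp10 : p < 10) (ha : a < 10)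
    (h : p ^ a < 7 ^ 9) : p ^ a < 10 ^ 7 := by
  have hcheck : ∀ p < 10, ∀ a < 10, p.Prime → p ^ a < 7 ^ 9 → p ^ a < 10 ^ 7 := by decide
  exact hcheck p hp10 a ha hp h

lemma dig_lt_six_add_phi_prime_pow {p a : ℕ} (hp : p.Prime) (ha : a ≠ 0) (h : p ^ a < 7 ^ 9) :
    dig 10 (p ^ a) < 6 + phi 10 (p ^ a) := by
  rw [phi_prime_pow hp ha]
  split_ifs with ha1
  · rw [ha1, pow_one]
    omega
  by_contra! hdig_ge
  have hdig : dig 10 (p ^ a) ≤ 8 := (dig_le_iff (by norm_num)).2 (by omega)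
  have := dig_pos (B := 10) hp.ne_zero
  have := dig_pos (B := 10) ha
  have hp10 : p < 10 := by simpa using (dig_le_iff (by norm_num)).1 (by omega : dig 10 p ≤ 1)
  have ha10 : a < 10 := by simpa using (dig_le_iff (by norm_num)).1 (by omega : dig 10 a ≤ 1)
  have := (dig_le_iff (k := 7) (by norm_num)).2 (prime_pow_lt_ten_pow_seven hp hp10 ha10 h)
  omega

theorem statement_19 :
    (6 : ℤ) ≤ hEcon 10 40353607 ∧
    ∀ n : ℕ, 0 < n → n < 40353607 → hEcon 10 n < 6 := by
  refine ⟨?_, fun n _ hlt => ?_⟩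
  · rw [show (40353607 : ℕ) = 7 ^ 9 by norm_num, hEcon,
      phi_prime_pow (by norm_num) (by norm_num)]
    norm_num [dig]
  by_contra! h6
  have hdig : dig 10 n ≤ 8 := (dig_le_iff (by norm_num)).2 (by omega)
  have hdig_ge : 6 + phi 10 n ≤ dig 10 n := by unfold hEcon at h6; omega
  by_cases hpow : IsPrimePow n
  · obtain ⟨p, a, hp, ha, rfl⟩ := (isPrimePow_nat_iff n).1 hpow
    have := dig_lt_six_add_phi_prime_pow hp ha.ne' hlt
    omega
  · have hn : 1 < n := by
      by_contra! hn
      have := (dig_le_iff (B := 10) (n := n) (k := 1) (by norm_num)).2 (by omega)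
      omega
    have hsmall := lt_sq_of_not_isPrimePow (B := 10) (by norm_num) hn hpow (by omega)
    have := (dig_le_iff (by norm_num)).2 hsmall
    omega
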